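/- arXiv:1412.4800 — 2 statements merged into one kernel-verified Lean document; each statement's English description precedes it below -/
import Mathlib

section
/- In the setting of the iterated central amalgamation: if a subgroup H of G is spread out, then every non-trivial subnormal subgroup S of H is spread out. In particular, every non-trivial subnormal subgroup S of G is spread out. -/
universe u

/-- The subgroup `D` of `G` is the free product of its subgroups `A` and `C` with
amalgamated central subgroup `B`: the cocone of inclusions satisfies the universal
property of the pushout of the two inclusions `B → A` and `B → C`. -/
structure IsCentralAmalgamIn {G : Type u} [Group G] (A C B D : Subgroup G) : Prop where
  A_le : A ≤ D
  C_le : C ≤ D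
  B_le_A : B ≤ A
  B_le_C : B ≤ C
  central_A : ∀ b ∈ B, ∀ a ∈ A, b * a = a * b
  central_C : ∀ b ∈ B, ∀ c ∈ C, b * c = c * b
  isPushout : ∀ (K : Type u) [Group K] (f : ↥A →* K) (g : ↥C →* K),
      (∀ (b : G) (hb : b ∈ B), f ⟨b, B_le_A hb⟩ = g ⟨b, B_le_C hb⟩) →
      ∃! φ : ↥D →* K,
        φ.comp (Subgroup.inclusion A_le) = f ∧ φ.comp (Subgroup.inclusion C_le) = g

/-- The setting of the iterated central amalgamation
`G = ⋃_n (H₀ *_{B₀} H₁ *_{B₁} ⋯ *_{B_{n-1}} H_n)`: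
`B₀ ⊇ B₁ ⊇ ⋯` is a descending sequence of groups with `⋂_n B_n = 1`; for each `n`,
`B_n` is a central subgroup of both `H_n` and `H_{n+1}` with `B_n ≠ H_n` and
`B_n ≠ H_{n+1}`; `G₀ = H₀`, `G_{n+1} = G_n *_{B_n} H_{n+1}` (free product with central
amalgamation) and `G = ⋃_n G_n`.  All groups are realized as subgroups of `G`. -/
structure IteratedAmalgam (G : Type u) [Group G] where
  Gn : ℕ → Subgroup G
  Hn : ℕ → Subgroup G
  Bn : ℕ → Subgroup G
  B_antitone : ∀ n, Bn (n + 1) ≤ Bn n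
  B_iInf : ⨅ n, Bn n = ⊥
  B_le_H : ∀ n, Bn n ≤ Hn n
  B_le_H_succ : ∀ n, Bn n ≤ Hn (n + 1)
  B_central_H : ∀ n, ∀ b ∈ Bn n, ∀ h ∈ Hn n, b * h = h * b
  B_central_H_succ : ∀ n, ∀ b ∈ Bn n, ∀ h ∈ Hn (n + 1), b * h = h * b
  B_ne_H : ∀ n, Bn n ≠ Hn n
  B_ne_H_succ : ∀ n, Bn n ≠ Hn (n + 1)
  G_zero : Gn 0 = Hn 0
  amalgam : ∀ n, IsCentralAmalgamIn (Gn n) (Hn (n + 1)) (Bn n) (Gn (n + 1))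
  iSup_G : ⨆ n, Gn n = ⊤

/-- A subgroup `H` of `G` is *spread out* if `H ⊄ G_n` for every `n`. -/
def IteratedAmalgam.SpreadOut {G : Type u} [Group G] (S : IteratedAmalgam G)
    (H : Subgroup G) : Prop :=
  ∀ n : ℕ, ¬ H ≤ S.Gn n

/-- `S` is a subnormal subgroup of `H`: there is a finite chain
`S = c 0 ⊴ c 1 ⊴ ⋯ ⊴ c m = H` of successive normal subgroups. -/
def Subnormal {G : Type u} [Group G] (S H : Subgroup G) : Prop :=
  ∃ (m : ℕ) (c : ℕ → Subgroup G), c 0 = S ∧ c m = H ∧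
    ∀ i < m, c i ≤ c (i + 1) ∧ ∀ g ∈ c (i + 1), ∀ x ∈ c i, g * x * g⁻¹ ∈ c i

/-!
An amalgam `D = A *_B C` over a subgroup `B` central in both factors maps onto the free product
`A/B * C/B`, and the kernel is exactly `B` because `B` is central in `D`. In a free product, an
element conjugating a nontrivial element of a factor back into that factor lies in that factor.
Hence if `g ∈ D \ A` conjugates `a ∈ A` into `A`, then `a ∈ B`.

Let `N ≠ 1` be normalized by a spread-out `H`, and suppose `N ≤ G_n`. For every `m ≥ n` some
`g ∈ H` lies in `G_{k+1} \ G_k` with `k ≥ m`; it conjugates `N ≤ G_k` into itself, so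
`N ≤ B_k ≤ B_m`. Thus `N ≤ ⋂ B_m = 1`, a contradiction. Going down a subnormal series gives the
theorem; `G` itself is spread out because `G_n ∩ H_{n+1} = B_n ≠ H_{n+1}`.
-/

namespace Monoid.CoprodI

variable {ι : Type*} {M : ι → Type*} [∀ i, Group (M i)]

theorem Word.length_le_one_of_prod_eq_of {i : ι} {w : Word M} {z : M i} (h : w.prod = of z) :
    w.toList.length ≤ 1 := by
  classical
  by_cases hz : z = 1
  · have : w = .empty := Word.equiv.symm.injective (by rw [hz, map_one] at h; exact h)
    simp [this, Word.empty]
  · have : w = (NeWord.singleton z hz).toWord :=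
      Word.equiv.symm.injective (h.trans (NeWord.prod_singleton z hz).symm)
    simp [this, NeWord.toWord]

theorem mem_range_of_conj_mem_range {i : ι} {x : M i} (hx : x ≠ 1) {g : CoprodI M}
    (h : g * of x * g⁻¹ ∈ (of : M i →* _).range) : g ∈ (of : M i →* _).range := by
  classical
  obtain ⟨z, hz⟩ := h
  by_contra hg
  -- `g⁻¹ = m * t` with `m ∈ M i` and `t` not starting in `M i`; then `g x g⁻¹` is the reduced
  -- word `t⁻¹ (m⁻¹ x m) t`, of length at least three.
  set p := Word.equivPair i (Word.equiv g⁻¹)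
  have hgp : g⁻¹ = of p.head * p.tail.prod := by
    rw [← Word.prod_rcons, ← Word.equivPair_symm, Equiv.symm_apply_apply]
    exact (Word.equiv.symm_apply_apply _).symm
  have htail : p.tail ≠ .empty := by
    intro he
    rw [he, Word.prod_empty, mul_one] at hgp
    exact hg ⟨p.head⁻¹, by rw [map_inv, ← hgp, inv_inv]⟩
  obtain ⟨j, k, v, hv⟩ := NeWord.of_word _ htail
  have hij : i ≠ j := by
    intro hij
    apply p.fstIdx_ne
    rw [← hv, hij]
    simp [Word.fstIdx, NeWord.toWord]
  have hy : p.head⁻¹ * x * p.head ≠ 1 := by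
    simpa [mul_assoc, inv_mul_eq_one] using hx
  set W := ((v.inv.append hij.symm (.singleton _ hy)).append hij v)
  have hW : W.prod = of z := by
    have hg' : g = (of p.head * v.prod)⁻¹ := by rw [NeWord.prod, hv, ← hgp, inv_inv]
    simp only [W, NeWord.append_prod, NeWord.inv_prod, NeWord.prod_singleton, hz, hg', map_mul,
      map_inv]
    group
  have := Word.length_le_one_of_prod_eq_of hW
  have h1 := List.length_pos_of_ne_nil v.inv.toList_ne_nil
  have h2 := List.length_pos_of_ne_nil v.toList_ne_nil
  simp [W, NeWord.toWord] at this
  omega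

end Monoid.CoprodI

theorem Subgroup.normal_of_le_center {G : Type*} [Group G] {N : Subgroup G}
    (hN : N ≤ Subgroup.center G) : N.Normal :=
  ⟨fun n hn g => by rwa [Subgroup.mem_center_iff.1 (hN hn) g, mul_inv_cancel_right]⟩

namespace Monoid.PushoutI

variable {ι : Type*} {G : ι → Type*} {H : Type*} [∀ i, Group (G i)] [Group H]
  {φ : ∀ i, H →* G i}

theorem base_range_le_center [Nonempty ι] (hφ : ∀ i, (φ i).range ≤ Subgroup.center (G i)) :
    (base φ).range ≤ Subgroup.center (PushoutI φ) := by
  rintro _ ⟨h, rfl⟩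
  have hof : ∀ i (g : G i), of i g * base φ h = base φ h * of i g := fun i g => by
    rw [← of_apply_eq_base φ i, ← map_mul, ← map_mul, (hφ i ⟨h, rfl⟩).comm]
  rw [Subgroup.mem_center_iff]
  intro k
  induction k using PushoutI.induction_on with
  | of i g => exact hof i g
  | base h' => rw [← of_apply_eq_base φ (Classical.arbitrary ι)]; exact hof _ _
  | mul y z ihy ihz => rw [mul_assoc, ihz, ← mul_assoc, ihy, mul_assoc]

variable [∀ i, (φ i).range.Normal]

def toCoprodIQuotient : PushoutI φ →* CoprodI (fun i => G i ⧸ (φ i).range) :=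
  lift (fun i => CoprodI.of.comp (QuotientGroup.mk' _)) 1 fun i => by
    ext h
    rw [MonoidHom.comp_apply, MonoidHom.comp_apply, QuotientGroup.mk'_apply,
      (QuotientGroup.eq_one_iff _).2 (MonoidHom.mem_range.2 ⟨h, rfl⟩), map_one,
      MonoidHom.one_apply]

@[simp]
theorem toCoprodIQuotient_of (i : ι) (g : G i) :
    toCoprodIQuotient (of (φ := φ) i g) =
      CoprodI.of (M := fun i => G i ⧸ (φ i).range) (g : G i ⧸ (φ i).range) :=
  lift_of ..

theorem ker_toCoprodIQuotient_le [(base φ).range.Normal] :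
    (toCoprodIQuotient (φ := φ)).ker ≤ (base φ).range := by
  intro k hk
  let ρ : CoprodI (fun i => G i ⧸ (φ i).range) →* PushoutI φ ⧸ (base φ).range :=
    CoprodI.lift fun i => QuotientGroup.lift _ ((QuotientGroup.mk' _).comp (of i)) <| by
      rintro _ ⟨h, rfl⟩
      simp [of_apply_eq_base]
  have hρ : ρ.comp toCoprodIQuotient = QuotientGroup.mk' _ := by
    refine hom_ext (fun i => by ext g; simp [ρ]) ?_
    ext h
    simpa [toCoprodIQuotient] using
      ((QuotientGroup.eq_one_iff _).2 (MonoidHom.mem_range.2 ⟨h, rfl⟩)).symm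
  rw [← QuotientGroup.eq_one_iff, ← QuotientGroup.mk'_apply, ← hρ, MonoidHom.comp_apply,
    hk, map_one]

theorem mem_range_of_conj_mem_range [(base φ).range.Normal] {i : ι} {x : G i}
    (hx : x ∉ (φ i).range) {k : PushoutI φ} (h : k * of i x * k⁻¹ ∈ (of i).range) :
    k ∈ (of i).range := by
  obtain ⟨y, hy⟩ := h
  have hx' : (x : G i ⧸ (φ i).range) ≠ 1 := by rwa [Ne, QuotientGroup.eq_one_iff]
  obtain ⟨q, hq⟩ := CoprodI.mem_range_of_conj_mem_range hx' (g := toCoprodIQuotient k)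
    ⟨y, by rw [← toCoprodIQuotient_of, hy, map_mul, map_mul, map_inv, toCoprodIQuotient_of]⟩
  obtain ⟨g, rfl⟩ := QuotientGroup.mk_surjective q
  have hker : k * (of i g)⁻¹ ∈ (base φ).range := ker_toCoprodIQuotient_le <| by
    rw [MonoidHom.mem_ker, map_mul, map_inv, toCoprodIQuotient_of, ← hq, mul_inv_cancel]
  have hbase : (base φ).range ≤ (of i).range := by
    rintro _ ⟨h, rfl⟩
    exact ⟨φ i h, of_apply_eq_base φ i h⟩
  simpa using mul_mem (hbase hker) (MonoidHom.mem_range.2 ⟨g, rfl⟩)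

end Monoid.PushoutI

namespace IsCentralAmalgamIn

open Monoid PushoutI

variable {G : Type u} [Group G] {A C B D : Subgroup G}

abbrev factor (A C : Subgroup G) (b : Bool) : Subgroup G := cond b A C

def baseIncl (h : IsCentralAmalgamIn A C B D) : ∀ b, B →* factor A C b
  | true => Subgroup.inclusion h.B_le_A
  | false => Subgroup.inclusion h.B_le_C

theorem baseIncl_injective (h : IsCentralAmalgamIn A C B D) (b : Bool) :
    Function.Injective (h.baseIncl b) := by
  cases b
  exacts [Subgroup.inclusion_injective h.B_le_C, Subgroup.inclusion_injective h.B_le_A]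

theorem baseIncl_range_le_center (h : IsCentralAmalgamIn A C B D) (b : Bool) :
    (h.baseIncl b).range ≤ Subgroup.center (factor A C b) := by
  rintro _ ⟨x, rfl⟩
  rw [Subgroup.mem_center_iff]
  intro y
  cases b
  exacts [Subtype.ext (h.central_C x x.2 y y.2).symm, Subtype.ext (h.central_A x x.2 y y.2).symm]

def toAmbient (h : IsCentralAmalgamIn A C B D) : PushoutI h.baseIncl →* G :=
  lift (fun b => (factor A C b).subtype) B.subtype (by rintro (_ | _) <;> rfl)

@[simp]
theorem toAmbient_of (h : IsCentralAmalgamIn A C B D) (b : Bool) (x : factor A C b) :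
    h.toAmbient (of b x) = x :=
  lift_of ..

@[simp]
theorem toAmbient_base (h : IsCentralAmalgamIn A C B D) (x : B) :
    h.toAmbient (base h.baseIncl x) = x :=
  lift_base ..

theorem exists_embedding (h : IsCentralAmalgamIn A C B D) : ∃ σ : D →* PushoutI h.baseIncl,
    σ.comp (Subgroup.inclusion h.A_le) = of (φ := h.baseIncl) true ∧
    σ.comp (Subgroup.inclusion h.C_le) = of (φ := h.baseIncl) false ∧
    h.toAmbient.comp σ = D.subtype := by
  obtain ⟨σ, ⟨hσA, hσC⟩, -⟩ :=
    h.isPushout _ (of (φ := h.baseIncl) true) (of (φ := h.baseIncl) false) fun b hb =>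
      (of_apply_eq_base h.baseIncl true ⟨b, hb⟩).trans
        (of_apply_eq_base h.baseIncl false ⟨b, hb⟩).symm
  obtain ⟨ψ, -, huniq⟩ := h.isPushout G A.subtype C.subtype fun _ _ => rfl
  refine ⟨σ, hσA, hσC, (huniq _ ⟨?_, ?_⟩).trans (huniq _ ⟨rfl, rfl⟩).symm⟩
  · rw [MonoidHom.comp_assoc, hσA]; ext; exact h.toAmbient_of true _
  · rw [MonoidHom.comp_assoc, hσC]; ext; exact h.toAmbient_of false _

theorem mem_of_conj_mem (h : IsCentralAmalgamIn A C B D) {g a : G} (hgD : g ∈ D) (hgA : g ∉ A)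
    (haA : a ∈ A) (hconj : g * a * g⁻¹ ∈ A) : a ∈ B := by
  obtain ⟨σ, hσA, -, hσ⟩ := h.exists_embedding
  have hσA' (x : G) (hx : x ∈ A) : σ ⟨x, h.A_le hx⟩ = of (φ := h.baseIncl) true ⟨x, hx⟩ :=
    DFunLike.congr_fun hσA ⟨x, hx⟩
  have := fun b => Subgroup.normal_of_le_center (h.baseIncl_range_le_center b)
  have := Subgroup.normal_of_le_center (base_range_le_center h.baseIncl_range_le_center)
  by_contra haB
  have hnot : (⟨a, haA⟩ : factor A C true) ∉ (h.baseIncl true).range := by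
    rintro ⟨x, hx⟩
    have hxa : (x : G) = a := congrArg Subtype.val hx
    exact haB (hxa ▸ x.2)
  obtain ⟨y, hy⟩ := mem_range_of_conj_mem_range hnot (k := σ ⟨g, hgD⟩) ⟨⟨_, hconj⟩, by
    rw [← hσA', ← hσA', ← map_inv, ← map_mul, ← map_mul]; rfl⟩
  have hyg : (y : G) = g := by
    rw [← h.toAmbient_of, hy, ← MonoidHom.comp_apply, hσ]; rfl
  exact hgA (hyg ▸ y.2)

theorem inf_le (h : IsCentralAmalgamIn A C B D) : A ⊓ C ≤ B := by
  obtain ⟨σ, hσA, hσC, hσ⟩ := h.exists_embedding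
  intro c ⟨hcA, hcC⟩
  have hmem : σ ⟨c, h.A_le hcA⟩ ∈ (of (φ := h.baseIncl) true).range ⊓ (of false).range :=
    ⟨⟨⟨c, hcA⟩, (DFunLike.congr_fun hσA ⟨c, hcA⟩).symm⟩,
      ⟨⟨c, hcC⟩, (DFunLike.congr_fun hσC ⟨c, hcC⟩).symm⟩⟩
  rw [inf_of_range_eq_base_range h.baseIncl_injective (by decide)] at hmem
  obtain ⟨x, hx⟩ := hmem
  have hxc : (x : G) = c := by
    rw [← h.toAmbient_base, hx, ← MonoidHom.comp_apply, hσ]; rfl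
  exact hxc ▸ x.2

end IsCentralAmalgamIn

namespace IteratedAmalgam

variable {G : Type u} [Group G] (S : IteratedAmalgam G)

theorem Gn_monotone : Monotone S.Gn :=
  monotone_nat_of_le_succ fun n => (S.amalgam n).A_le

theorem Bn_antitone : Antitone S.Bn :=
  antitone_nat_of_succ_le S.B_antitone

theorem exists_mem_Gn (g : G) : ∃ n, g ∈ S.Gn n := by
  have : g ∈ ⨆ n, S.Gn n := S.iSup_G ▸ Subgroup.mem_top g
  rwa [Subgroup.mem_iSup_of_directed S.Gn_monotone.directed_le] at this

theorem exists_mem_Gn_succ_not_mem {g : G} {m : ℕ} (hg : g ∉ S.Gn m) :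
    ∃ k, m ≤ k ∧ g ∈ S.Gn (k + 1) ∧ g ∉ S.Gn k := by
  classical
  have hex := S.exists_mem_Gn g
  have hfind : m < Nat.find hex := lt_of_not_ge fun hle =>
    hg (S.Gn_monotone hle (Nat.find_spec hex))
  obtain ⟨k, hk⟩ := Nat.exists_eq_add_one_of_ne_zero (n := Nat.find hex) (by omega)
  refine ⟨k, by omega, hk ▸ Nat.find_spec hex, Nat.find_min hex (by omega)⟩

theorem spreadOut_top : S.SpreadOut ⊤ := fun n htop =>
  S.B_ne_H_succ n <| le_antisymm (S.B_le_H_succ n) fun _ hx =>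
    (S.amalgam n).inf_le ⟨htop trivial, hx⟩

variable {S}

theorem SpreadOut.of_conj_mem {H N : Subgroup G} (hH : S.SpreadOut H)
    (hconj : ∀ g ∈ H, ∀ x ∈ N, g * x * g⁻¹ ∈ N) (hN : N ≠ ⊥) : S.SpreadOut N := by
  intro n hNn
  have hNB : ∀ m, n ≤ m → N ≤ S.Bn m := by
    intro m hnm x hx
    obtain ⟨g, hgH, hgm⟩ := SetLike.not_le_iff_exists.1 (hH m)
    obtain ⟨k, hmk, hgk1, hgk⟩ := S.exists_mem_Gn_succ_not_mem hgm
    have hNk : N ≤ S.Gn k := hNn.trans (S.Gn_monotone (hnm.trans hmk))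
    exact S.Bn_antitone hmk <|
      (S.amalgam k).mem_of_conj_mem hgk1 hgk (hNk hx) (hNk (hconj g hgH x hx))
  apply hN
  rw [eq_bot_iff, ← S.B_iInf]
  exact le_iInf fun m =>
    (hNB (max m n) (le_max_right m n)).trans (S.Bn_antitone (le_max_left m n))

end IteratedAmalgam

theorem Subnormal.induction_down {G : Type u} [Group G] {T H : Subgroup G}
    {P : Subgroup G → Prop} (hTH : Subnormal T H) (hH : P H)
    (step : ∀ N K : Subgroup G, T ≤ N → (∀ g ∈ K, ∀ x ∈ N, g * x * g⁻¹ ∈ N) → P K → P N) :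
    P T := by
  obtain ⟨m, c, rfl, rfl, hc⟩ := hTH
  have hle : ∀ i ≤ m, c 0 ≤ c i := by
    intro i hi
    induction i with
    | zero => exact le_rfl
    | succ i ih => exact (ih (by omega)).trans (hc i (by omega)).1
  exact Nat.decreasingInduction (motive := fun i _ => P (c i))
    (fun i hi hP => step _ _ (hle i hi.le) (hc i hi).2 hP) hH (Nat.zero_le m)

/-- If a subgroup `H` of `G` is spread out, then every non-trivial subnormal subgroup
of `H` is spread out; in particular, every non-trivial subnormal subgroup of `G` is
spread out. -/
theorem spreadOut_of_subnormal_of_spreadOut {G : Type u} [Group G]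
    (S : IteratedAmalgam G) :
    (∀ H : Subgroup G, S.SpreadOut H →
      ∀ T : Subgroup G, Subnormal T H → T ≠ ⊥ → S.SpreadOut T) ∧
    (∀ T : Subgroup G, Subnormal T ⊤ → T ≠ ⊥ → S.SpreadOut T) := by
  have hsub : ∀ H : Subgroup G, S.SpreadOut H →
      ∀ T : Subgroup G, Subnormal T H → T ≠ ⊥ → S.SpreadOut T :=
    fun H hH T hTH hT => hTH.induction_down hH fun _ _ hTN hconj hK =>
      hK.of_conj_mem hconj (ne_bot_of_le_ne_bot hT hTN)
  exact ⟨hsub, fun T => hsub ⊤ S.spreadOut_top T⟩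
end

section
/- In the setting of the iterated central amalgamation: if S is a non-trivial subnormal subgroup of G, then every term S^(n) of the derived series of S is non-trivial; in particular, S is not soluble. -/
universe u

/-- The derived series of a subgroup: `T^(0) = T` and `T^(n+1) = ⁅T^(n), T^(n)⁆`. -/
def derivedSeriesOf {G : Type u} [Group G] (T : Subgroup G) : ℕ → Subgroup G
  | 0 => T
  | n + 1 => ⁅derivedSeriesOf T n, derivedSeriesOf T n⁆

/-!
Take `t ≠ 1` in `T`. Since `⋂ B_n = 1` and `G = ⋃ G_n`, for some `n` we have `t ∈ G_n \ B_n`;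
pick `h ∈ H_{n+1} \ B_n`. If `T` has subnormal defect `m`, the `m`-fold iterated commutator
`[h, t, …, t]` lies in `T`, so taking one more commutator with `t` lands in `T'`. But in the
amalgamated product `G_n *_{B_n} H_{n+1}` each such commutator is `[y, t] = y t y⁻¹ t⁻¹` for a
reduced word `y` beginning and ending with letters of `H_{n+1} \ B_n`; written out, `y t y⁻¹ t⁻¹`
is a nonempty reduced word, hence `≠ 1` by the normal form theorem. So `T' ≠ 1`, and since `T'`
is again subnormal, induction gives `T^(n) ≠ 1` for all `n`.
-/

open Function
open scoped commutatorElement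

section

variable {G : Type*} [Group G]

theorem MonoidHom.map_iterate_commutatorElement {N : Type*} [Group N] (f : G →* N) (t x : G)
    (k : ℕ) : f ((fun y => ⁅y, t⁆)^[k] x) = (fun y => ⁅y, f t⁆)^[k] (f x) :=
  Semiconj.iterate_right (fun y => map_commutatorElement f y t) k x

theorem Subgroup.conj_mem_commutator_self {K : Subgroup G} {g x : G} (hg : g ∈ K)
    (hx : x ∈ ⁅K, K⁆) : g * x * g⁻¹ ∈ ⁅K, K⁆ := by
  have hconj : g * x * g⁻¹ = ⁅g, x⁆ * x := by
    rw [commutatorElement_def]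
    group
  rw [hconj]
  exact mul_mem (Subgroup.commutator_mem_commutator hg (K.commutator_le_self hx)) hx

theorem Subgroup.map_subtype_derivedSeries (T : Subgroup G) (n : ℕ) :
    (derivedSeries T n).map T.subtype = derivedSeriesOf T n := by
  induction n with
  | zero => exact (MonoidHom.range_eq_map _).symm.trans T.range_subtype
  | succ n ih => rw [derivedSeries_succ, Subgroup.map_commutator, ih]; rfl

end

namespace Subnormal

variable {G : Type u} [Group G] {S T H : Subgroup G}

theorem of_le_of_conj_mem (hle : S ≤ T) (hconj : ∀ g ∈ T, ∀ x ∈ S, g * x * g⁻¹ ∈ S)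
    (hT : Subnormal T H) : Subnormal S H := by
  obtain ⟨m, c, rfl, hcm, hstep⟩ := hT
  refine ⟨m + 1, fun | 0 => S | i + 1 => c i, rfl, hcm, ?_⟩
  rintro (_ | i) hi
  · exact ⟨hle, hconj⟩
  · exact hstep i (by omega)

theorem derivedSeriesOf (hT : Subnormal T H) (n : ℕ) : Subnormal (derivedSeriesOf T n) H := by
  induction n with
  | zero => exact hT
  | succ n ih =>
    exact ih.of_le_of_conj_mem (Subgroup.commutator_le_self _)
      fun _ hg _ hx => Subgroup.conj_mem_commutator_self hg hx

theorem exists_iterate_commutator_mem (hT : Subnormal T H) {t : G} (ht : t ∈ T) :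
    ∃ m, ∀ x ∈ H, (fun y => ⁅y, t⁆)^[m] x ∈ T := by
  obtain ⟨m, c, rfl, rfl, hstep⟩ := hT
  refine ⟨m, ?_⟩
  induction m generalizing c t with
  | zero => exact fun x hx => hx
  | succ m ih =>
    intro x hx
    have hx' : (fun y => ⁅y, t⁆)^[m] x ∈ c 1 :=
      ih (c := fun i => c (i + 1)) (hstep := fun i hi => hstep (i + 1) (by omega))
        (ht := (hstep 0 m.succ_pos).1 ht) x hx
    rw [iterate_succ_apply', commutatorElement_def]
    exact mul_mem ((hstep 0 m.succ_pos).2 _ hx' t ht) (inv_mem ht)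

end Subnormal

namespace Monoid.PushoutI

variable {ι : Type*} {G : ι → Type*} {H : Type*} [∀ i, Group (G i)] [Group H]
  (φ : ∀ i, H →* G i)

def listProd (L : List (Σ i, G i)) : PushoutI φ :=
  (L.map fun p => of p.1 p.2).prod

def IsReducedList (L : List (Σ i, G i)) : Prop :=
  L.IsChain (fun p q => p.1 ≠ q.1) ∧ ∀ p ∈ L, p.2 ∉ (φ p.1).range

def EndsOutside (i : ι) (x : PushoutI φ) : Prop :=
  ∃ L : List (Σ i, G i), IsReducedList φ L ∧ L ≠ [] ∧ (∀ p ∈ L.head?, p.1 ≠ i) ∧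
    (∀ p ∈ L.getLast?, p.1 ≠ i) ∧ listProd φ L = x

variable {φ}

theorem IsReducedList.listProd_ne_one (hφ : ∀ i, Injective (φ i)) {L : List (Σ i, G i)}
    (hL : IsReducedList φ L) (hne : L ≠ []) : listProd φ L ≠ 1 := by
  intro h1
  let w : CoprodI.Word G := ⟨L, fun p hp h => hL.2 p hp (h ▸ one_mem _), hL.1⟩
  have hw : ofCoprodI w.prod = listProd φ L := by
    simp [w, CoprodI.Word.prod, listProd, map_list_prod, comp_def]
  have := Reduced.eq_empty_of_mem_range (w := w) hφ hL.2 (by rw [hw, h1]; exact one_mem _)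
  exact hne (congrArg CoprodI.Word.toList this)

variable {i : ι} {x y : PushoutI φ}

theorem endsOutside_of {j : ι} (hj : j ≠ i) {g : G j} (hg : g ∉ (φ j).range) :
    EndsOutside φ i (of j g) :=
  ⟨[⟨j, g⟩], ⟨List.isChain_singleton _, by simpa using hg⟩, List.cons_ne_nil _ _,
    by simpa using hj, by simpa using hj, by simp [listProd]⟩

theorem EndsOutside.inv (hx : EndsOutside φ i x) : EndsOutside φ i x⁻¹ := by
  obtain ⟨L, ⟨hchain, hred⟩, hne, hhead, hlast, rfl⟩ := hx
  refine ⟨(L.map fun p => ⟨p.1, p.2⁻¹⟩).reverse, ⟨?_, ?_⟩, by simpa using hne, ?_, ?_, ?_⟩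
  · rw [List.isChain_reverse, List.isChain_map]
    exact hchain.imp fun _ _ h => h.symm
  · intro q hq
    obtain ⟨p, hp, rfl⟩ := List.mem_map.1 (List.mem_reverse.1 hq)
    simpa [Subgroup.inv_mem_iff] using hred p hp
  · intro q hq
    rw [List.head?_reverse, List.getLast?_map] at hq
    obtain ⟨p, hp, rfl⟩ := Option.mem_map.1 hq
    exact hlast p hp
  · intro q hq
    rw [List.getLast?_reverse, List.head?_map] at hq
    obtain ⟨p, hp, rfl⟩ := Option.mem_map.1 hq
    exact hhead p hp
  · simp [listProd, List.prod_inv_reverse, List.map_reverse, comp_def]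

theorem EndsOutside.mul_of_mul (hx : EndsOutside φ i x) (hy : EndsOutside φ i y) {g : G i}
    (hg : g ∉ (φ i).range) : EndsOutside φ i (x * of i g * y) := by
  obtain ⟨L, ⟨hLc, hLr⟩, hLne, hLh, hLl, rfl⟩ := hx
  obtain ⟨M, ⟨hMc, hMr⟩, hMne, hMh, hMl, rfl⟩ := hy
  refine ⟨L ++ ⟨i, g⟩ :: M, ⟨?_, ?_⟩, by simp, ?_, ?_, by simp [listProd, mul_assoc]⟩
  · refine hLc.append (List.isChain_cons.2 ⟨fun q hq => (hMh q hq).symm, hMc⟩) ?_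
    simpa using hLl
  · simp only [List.mem_append, List.mem_cons]
    rintro p (hp | rfl | hp)
    exacts [hLr p hp, hg, hMr p hp]
  · rwa [List.head?_append_of_ne_nil _ hLne]
  · rwa [← List.singleton_append, ← List.append_assoc, List.getLast?_append_of_ne_nil _ hMne]

theorem EndsOutside.mul_of_ne_one (hφ : ∀ i, Injective (φ i)) (hx : EndsOutside φ i x)
    {g : G i} (hg : g ∉ (φ i).range) : x * of i g ≠ 1 := by
  obtain ⟨L, ⟨hLc, hLr⟩, -, -, hLl, rfl⟩ := hx
  have hred : IsReducedList φ (L ++ [⟨i, g⟩]) := by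
    refine ⟨hLc.append (List.isChain_singleton _) (by simpa using hLl), ?_⟩
    simp only [List.mem_append, List.mem_singleton]
    rintro p (hp | rfl)
    exacts [hLr p hp, hg]
  simpa [listProd] using hred.listProd_ne_one hφ (by simp)

theorem EndsOutside.commutatorElement_ne_one (hφ : ∀ i, Injective (φ i))
    (hx : EndsOutside φ i x) {g : G i} (hg : g ∉ (φ i).range) : ⁅x, of (φ := φ) i g⁆ ≠ 1 := by
  rw [commutatorElement_def, ← map_inv (of (φ := φ) i) g]
  exact (hx.mul_of_mul hx.inv hg).mul_of_ne_one hφ (by rwa [Subgroup.inv_mem_iff])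

theorem iterate_commutatorElement_ne_one (hφ : ∀ i, Injective (φ i)) {j : ι} (hj : j ≠ i)
    {a : G i} (ha : a ∉ (φ i).range) {c : G j} (hc : c ∉ (φ j).range) (k : ℕ) :
    (fun y => ⁅y, of (φ := φ) i a⁆)^[k + 1] (of j c) ≠ 1 := by
  set u := of (φ := φ) i a
  -- the `(k + 1)`-st iterate is `⁅y_k, u⁆` where `y_0 = of j c` and `y_{k+1} = y_k u y_k⁻¹`
  suffices ∀ k, ∃ y, EndsOutside φ i y ∧ (fun y => ⁅y, u⁆)^[k + 1] (of j c) = ⁅y, u⁆ by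
    obtain ⟨y, hy, h⟩ := this k
    exact h ▸ hy.commutatorElement_ne_one hφ ha
  intro k
  induction k with
  | zero => exact ⟨of j c, endsOutside_of hj hc, rfl⟩
  | succ k ih =>
    obtain ⟨y, hy, h⟩ := ih
    refine ⟨y * u * y⁻¹, hy.mul_of_mul hy.inv ha, ?_⟩
    rw [iterate_succ_apply', h]
    simp only [commutatorElement_def]
    group

end Monoid.PushoutI

open Monoid in
theorem IsCentralAmalgamIn.iterate_commutatorElement_ne_one {G : Type u} [Group G]
    {A C B D : Subgroup G} (am : IsCentralAmalgamIn A C B D) {t c : G} (htA : t ∈ A)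
    (htB : t ∉ B) (hcC : c ∈ C) (hcB : c ∉ B) (k : ℕ) :
    (fun y => ⁅y, t⁆)^[k + 1] c ≠ 1 := by
  let φ : ∀ b : Bool, B →* ↥(cond b A C) := fun b =>
    Subgroup.inclusion (by cases b; exacts [am.B_le_C, am.B_le_A])
  have hφ : ∀ b, Injective (φ b) := fun b => Subgroup.inclusion_injective _
  obtain ⟨Ψ, ⟨hΨA, hΨC⟩, -⟩ := am.isPushout (PushoutI φ) (PushoutI.of (φ := φ) true)
    (PushoutI.of (φ := φ) false) fun b hb =>
      (PushoutI.of_apply_eq_base φ true ⟨b, hb⟩).trans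
        (PushoutI.of_apply_eq_base φ false ⟨b, hb⟩).symm
  have hta : (⟨t, htA⟩ : A) ∉ (φ true).range := by
    rwa [Subgroup.inclusion_range, Subgroup.mem_subgroupOf]
  have hcc : (⟨c, hcC⟩ : C) ∉ (φ false).range := by
    rwa [Subgroup.inclusion_range, Subgroup.mem_subgroupOf]
  have hne := PushoutI.iterate_commutatorElement_ne_one hφ Bool.false_ne_true hta hcc k
  rw [← DFunLike.congr_fun hΨA ⟨t, htA⟩, ← DFunLike.congr_fun hΨC ⟨c, hcC⟩] at hne
  intro h1
  refine hne ?_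
  rw [MonoidHom.comp_apply, MonoidHom.comp_apply, ← MonoidHom.map_iterate_commutatorElement]
  convert map_one Ψ
  exact Subtype.ext ((D.subtype.map_iterate_commutatorElement _ _ _).trans h1)

namespace IteratedAmalgam

variable {G : Type u} [Group G]

theorem exists_mem_Gn_notMem_Bn (S : IteratedAmalgam G) {t : G} (ht : t ≠ 1) :
    ∃ n, t ∈ S.Gn n ∧ t ∉ S.Bn n := by
  have hG : Monotone S.Gn := monotone_nat_of_le_succ fun n => (S.amalgam n).A_le
  obtain ⟨N, htN⟩ := (Subgroup.mem_iSup_of_directed hG.directed_le).mp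
    (S.iSup_G ▸ Subgroup.mem_top t)
  obtain ⟨n, htn⟩ : ∃ n, t ∉ S.Bn n := by
    by_contra! h
    exact ht (Subgroup.mem_bot.mp (S.B_iInf ▸ Subgroup.mem_iInf.mpr h))
  exact ⟨max N n, hG (le_max_left N n) htN,
    fun h => htn (antitone_nat_of_succ_le S.B_antitone (le_max_right N n) h)⟩

theorem exists_mem_Hn_succ_notMem_Bn (S : IteratedAmalgam G) (n : ℕ) :
    ∃ h ∈ S.Hn (n + 1), h ∉ S.Bn n :=
  SetLike.exists_of_lt (lt_of_le_of_ne (S.B_le_H_succ n) (S.B_ne_H_succ n))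

theorem commutator_ne_bot_of_subnormal (S : IteratedAmalgam G) {T : Subgroup G}
    (hT : Subnormal T ⊤) (hTbot : T ≠ ⊥) : ⁅T, T⁆ ≠ ⊥ := by
  obtain ⟨t, htT, ht1⟩ := T.bot_or_exists_ne_one.resolve_left hTbot
  obtain ⟨n, htG, htB⟩ := S.exists_mem_Gn_notMem_Bn ht1
  obtain ⟨h, hhH, hhB⟩ := S.exists_mem_Hn_succ_notMem_Bn n
  obtain ⟨m, hm⟩ := hT.exists_iterate_commutator_mem htT
  have hmem : (fun y => ⁅y, t⁆)^[m + 1] h ∈ ⁅T, T⁆ := by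
    rw [iterate_succ_apply']
    exact Subgroup.commutator_mem_commutator (hm h (Subgroup.mem_top h)) htT
  intro hbot
  rw [hbot, Subgroup.mem_bot] at hmem
  exact (S.amalgam n).iterate_commutatorElement_ne_one htG htB hhH hhB m hmem

end IteratedAmalgam

/-- If `T` is a non-trivial subnormal subgroup of `G`, then every term `T^(n)` of the
derived series of `T` is non-trivial; in particular, `T` is not soluble. -/
theorem derivedSeries_ne_bot_of_subnormal {G : Type u} [Group G]
    (S : IteratedAmalgam G) (T : Subgroup G) (hT : Subnormal T ⊤) (hTbot : T ≠ ⊥) :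
    (∀ n : ℕ, derivedSeriesOf T n ≠ ⊥) ∧ ¬ IsSolvable ↥T := by
  have hne : ∀ n, derivedSeriesOf T n ≠ ⊥ := by
    intro n
    induction n with
    | zero => exact hTbot
    | succ n ih => exact S.commutator_ne_bot_of_subnormal (hT.derivedSeriesOf n) ih
  refine ⟨hne, fun hsolv => ?_⟩
  obtain ⟨n, hn⟩ := hsolv.solvable
  exact hne n (by rw [← T.map_subtype_derivedSeries, hn, Subgroup.map_bot])
end
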